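/- Under the hypotheses of the perturbed time-varying projected-gradient tracking iteration (strong monotonicity η, Lipschitz constant L, step size 0 < α < 2η/L², perturbation bound E ≥ 0, optimizer drift bound σ ≥ 0), the tracking error satisfies limsup_{k→∞} ‖z_k − z*_k‖ ≤ (αE + σ)/(1 − ρ), where ρ = √(1 − 2αη + α²L²). -/

import Mathlib

/-!
The exact map `z ↦ proj_{Y_k}(z - α Φ_k z)` is a `ρ`-contraction: the gradient step contracts by
strong monotonicity and Lipschitz continuity, and the projection onto a convex set is
nonexpansive. The perturbation `e_k` costs at most `α E` per step and moving from `z*_k` to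
`z*_{k+1}` at most `σ`, so the error `d_k = ‖z_k - z*_k‖` obeys `d_{k+1} ≤ ρ d_k + (α E + σ)`,
whose iterates approach the fixed point `(α E + σ) / (1 - ρ)` geometrically.
-/

/-- `p` is a metric projection (nearest point) of `x` onto `Y`. -/
def IsProjOn {E : Type*} [NormedAddCommGroup E] (Y : Set E) (x p : E) : Prop :=
  p ∈ Y ∧ ∀ y ∈ Y, ‖x - p‖ ≤ ‖x - y‖

open Filter Topology
open scoped InnerProductSpace

section Projection

variable {F : Type*} [NormedAddCommGroup F] [InnerProductSpace ℝ F] {Y : Set F}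

theorem IsProjOn.inner_sub_nonpos (hY : Convex ℝ Y) {x p : F} (hp : IsProjOn Y x p) :
    ∀ w ∈ Y, ⟪x - p, w - p⟫_ℝ ≤ 0 := by
  have : Nonempty Y := ⟨⟨p, hp.1⟩⟩
  refine (norm_eq_iInf_iff_real_inner_le_zero hY hp.1).1 (le_antisymm ?_ ?_)
  · exact le_ciInf fun w => hp.2 w w.2
  · exact ciInf_le ⟨0, fun _ ⟨_, h⟩ => h ▸ norm_nonneg _⟩ (⟨p, hp.1⟩ : Y)

theorem IsProjOn.norm_sub_le (hY : Convex ℝ Y) {x y p q : F}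
    (hp : IsProjOn Y x p) (hq : IsProjOn Y y q) : ‖p - q‖ ≤ ‖x - y‖ := by
  have hpq : ‖p - q‖ ^ 2 ≤ ⟪x - y, p - q⟫_ℝ := by
    have h₁ := hp.inner_sub_nonpos hY q hq.1
    have h₂ := hq.inner_sub_nonpos hY p hp.1
    have hsum : ⟪x - p, q - p⟫_ℝ + ⟪y - q, p - q⟫_ℝ = ‖p - q‖ ^ 2 - ⟪x - y, p - q⟫_ℝ := by
      rw [show q - p = -(p - q) by abel, inner_neg_right,
        show x - p = (x - y) - (p - q) + (y - q) by abel,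
        inner_add_left, inner_sub_left, real_inner_self_eq_norm_sq]
      ring
    linarith
  have hcs : ⟪x - y, p - q⟫_ℝ ≤ ‖x - y‖ * ‖p - q‖ := real_inner_le_norm _ _
  rcases (norm_nonneg (p - q)).eq_or_lt with h | h
  · rw [← h]; exact norm_nonneg _
  · nlinarith

end Projection

theorem norm_sub_smul_le_sqrt_mul_norm {F : Type*} [NormedAddCommGroup F]
    [InnerProductSpace ℝ F] {u v : F} {η L α : ℝ} (hα : 0 ≤ α)
    (hmono : η * ‖u‖ ^ 2 ≤ ⟪v, u⟫_ℝ) (hlip : ‖v‖ ≤ L * ‖u‖) :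
    ‖u - α • v‖ ≤ √(1 - 2 * α * η + α ^ 2 * L ^ 2) * ‖u‖ := by
  have hsq : ‖u - α • v‖ ^ 2 ≤ (1 - 2 * α * η + α ^ 2 * L ^ 2) * ‖u‖ ^ 2 := by
    have hv : ‖v‖ ^ 2 ≤ (L * ‖u‖) ^ 2 := pow_le_pow_left₀ (norm_nonneg v) hlip 2
    rw [norm_sub_sq_real, inner_smul_right, real_inner_comm, norm_smul, Real.norm_eq_abs,
      abs_of_nonneg hα]
    nlinarith [mul_le_mul_of_nonneg_left hmono hα]
  calc ‖u - α • v‖ = √(‖u - α • v‖ ^ 2) := (Real.sqrt_sq (norm_nonneg _)).symm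
    _ ≤ √((1 - 2 * α * η + α ^ 2 * L ^ 2) * ‖u‖ ^ 2) := Real.sqrt_le_sqrt hsq
    _ = √(1 - 2 * α * η + α ^ 2 * L ^ 2) * ‖u‖ := by
      rw [Real.sqrt_mul' _ (sq_nonneg _), Real.sqrt_sq (norm_nonneg _)]

theorem sqrt_one_sub_two_mul_add_sq_mul_sq_lt_one {η L α : ℝ} (hα0 : 0 < α)
    (hα : α < 2 * η / L ^ 2) : √(1 - 2 * α * η + α ^ 2 * L ^ 2) < 1 := by
  have hL : 0 < L ^ 2 := by
    rcases eq_or_ne L 0 with rfl | hL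
    · simp at hα; linarith
    · positivity
  have hαL : α * L ^ 2 < 2 * η := (lt_div_iff₀ hL).mp hα
  rw [Real.sqrt_lt' one_pos]
  nlinarith

theorem limsup_le_div_one_sub_of_le_mul_add {d : ℕ → ℝ} {b ρ c : ℝ} (hb : ∀ k, b ≤ d k)
    (hρ0 : 0 ≤ ρ) (hρ1 : ρ < 1) (hrec : ∀ k, d (k + 1) ≤ ρ * d k + c) :
    limsup d atTop ≤ c / (1 - ρ) := by
  set C := c / (1 - ρ)
  have hC : ρ * C + c = C := by
    simp only [C]
    field_simp [(sub_pos.2 hρ1).ne']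
    ring
  have hbound : ∀ k, d k ≤ ρ ^ k * (d 0 - C) + C := by
    intro k
    induction k with
    | zero => simp
    | succ k ih =>
      calc d (k + 1) ≤ ρ * d k + c := hrec k
        _ ≤ ρ * (ρ ^ k * (d 0 - C) + C) + c := by gcongr
        _ = ρ ^ (k + 1) * (d 0 - C) + (ρ * C + c) := by ring
        _ = ρ ^ (k + 1) * (d 0 - C) + C := by rw [hC]
  have hlim : Tendsto (fun k => ρ ^ k * (d 0 - C) + C) atTop (𝓝 C) := by
    simpa using ((tendsto_pow_atTop_nhds_zero_of_lt_one hρ0 hρ1).mul_const (d 0 - C)).add_const C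
  calc limsup d atTop ≤ limsup (fun k => ρ ^ k * (d 0 - C) + C) atTop :=
        limsup_le_limsup (Eventually.of_forall hbound) (isCoboundedUnder_le_of_le atTop hb)
          hlim.isBoundedUnder_le
    _ = C := hlim.limsup_eq

theorem stmt_5_general (n : ℕ) (Y : ℕ → Set (EuclideanSpace ℝ (Fin n)))
    (hYcv : ∀ k, Convex ℝ (Y k))
    (Φ : ℕ → EuclideanSpace ℝ (Fin n) → EuclideanSpace ℝ (Fin n))
    (η L α E σ : ℝ)
    (hmono : ∀ k x y, η * ‖x - y‖ ^ 2 ≤ (inner ℝ (Φ k x - Φ k y) (x - y) : ℝ))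
    (hlip : ∀ k x y, ‖Φ k x - Φ k y‖ ≤ L * ‖x - y‖)
    (proj : ℕ → EuclideanSpace ℝ (Fin n) → EuclideanSpace ℝ (Fin n))
    (hproj : ∀ k x, IsProjOn (Y k) x (proj k x))
    (zstar : ℕ → EuclideanSpace ℝ (Fin n))
    (hfix : ∀ k, proj k (zstar k - α • Φ k (zstar k)) = zstar k)
    (z e : ℕ → EuclideanSpace ℝ (Fin n))
    (hiter : ∀ k, z (k + 1) = proj k (z k - α • (Φ k (z k) + e k)))
    (herr : ∀ k, ‖e k‖ ≤ E)
    (hdrift : ∀ k, ‖zstar (k + 1) - zstar k‖ ≤ σ)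
    (hα0 : 0 < α) (hα : α < 2 * η / L ^ 2) :
    Filter.limsup (fun k => ‖z k - zstar k‖) Filter.atTop ≤
      (α * E + σ) / (1 - Real.sqrt (1 - 2 * α * η + α ^ 2 * L ^ 2)) := by
  refine limsup_le_div_one_sub_of_le_mul_add (fun k => norm_nonneg _) (Real.sqrt_nonneg _)
    (sqrt_one_sub_two_mul_add_sq_mul_sq_lt_one hα0 hα) fun k => ?_
  have hproj_le : ‖z (k + 1) - zstar k‖ ≤
      ‖(z k - α • Φ k (z k) - (zstar k - α • Φ k (zstar k))) - α • e k‖ := by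
    have h := (hproj k (z k - α • (Φ k (z k) + e k))).norm_sub_le (hYcv k)
      (hproj k (zstar k - α • Φ k (zstar k)))
    rw [← hiter, hfix] at h
    refine h.trans_eq (congrArg norm ?_)
    rw [smul_add]; abel
  have hgrad : ‖z k - α • Φ k (z k) - (zstar k - α • Φ k (zstar k))‖ ≤
      √(1 - 2 * α * η + α ^ 2 * L ^ 2) * ‖z k - zstar k‖ := by
    rw [show z k - α • Φ k (z k) - (zstar k - α • Φ k (zstar k))
        = z k - zstar k - α • (Φ k (z k) - Φ k (zstar k)) by rw [smul_sub]; abel]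
    exact norm_sub_smul_le_sqrt_mul_norm hα0.le (hmono k _ _) (hlip k _ _)
  have herr' : ‖α • e k‖ ≤ α * E := by
    rw [norm_smul, Real.norm_of_nonneg hα0.le]
    exact mul_le_mul_of_nonneg_left (herr k) hα0.le
  calc ‖z (k + 1) - zstar (k + 1)‖
      ≤ ‖z (k + 1) - zstar k‖ + ‖zstar (k + 1) - zstar k‖ := by
        rw [norm_sub_rev (zstar (k + 1))]; exact norm_sub_le_norm_sub_add_norm_sub _ _ _
    _ ≤ ‖z k - α • Φ k (z k) - (zstar k - α • Φ k (zstar k))‖ + ‖α • e k‖ + σ := by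
        linarith [hproj_le.trans (norm_sub_le _ _), hdrift k]
    _ ≤ √(1 - 2 * α * η + α ^ 2 * L ^ 2) * ‖z k - zstar k‖ + (α * E + σ) := by linarith

theorem stmt_5 (n : ℕ) (Y : ℕ → Set (EuclideanSpace ℝ (Fin n)))
    (hYne : ∀ k, (Y k).Nonempty) (hYcl : ∀ k, IsClosed (Y k)) (hYcv : ∀ k, Convex ℝ (Y k))
    (Φ : ℕ → EuclideanSpace ℝ (Fin n) → EuclideanSpace ℝ (Fin n))
    (η L α E σ : ℝ) (hη : 0 < η)
    (hmono : ∀ k x y, η * ‖x - y‖ ^ 2 ≤ (inner ℝ (Φ k x - Φ k y) (x - y) : ℝ))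
    (hlip : ∀ k x y, ‖Φ k x - Φ k y‖ ≤ L * ‖x - y‖)
    (proj : ℕ → EuclideanSpace ℝ (Fin n) → EuclideanSpace ℝ (Fin n))
    (hproj : ∀ k x, IsProjOn (Y k) x (proj k x))
    (zstar : ℕ → EuclideanSpace ℝ (Fin n)) (hzY : ∀ k, zstar k ∈ Y k)
    (hfix : ∀ k, proj k (zstar k - α • Φ k (zstar k)) = zstar k)
    (z e : ℕ → EuclideanSpace ℝ (Fin n))
    (hiter : ∀ k, z (k + 1) = proj k (z k - α • (Φ k (z k) + e k)))
    (hE : 0 ≤ E) (hσ : 0 ≤ σ)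
    (herr : ∀ k, ‖e k‖ ≤ E)
    (hdrift : ∀ k, ‖zstar (k + 1) - zstar k‖ ≤ σ)
    (hα0 : 0 < α) (hα : α < 2 * η / L ^ 2) :
    Filter.limsup (fun k => ‖z k - zstar k‖) Filter.atTop ≤
      (α * E + σ) / (1 - Real.sqrt (1 - 2 * α * η + α ^ 2 * L ^ 2)) :=
  stmt_5_general n Y hYcv Φ η L α E σ hmono hlip proj hproj zstar hfix z e hiter herr hdrift hα0 hα
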